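/- arXiv:2008.00875 — 2 statements merged into one kernel-verified Lean document; each statement's English description precedes it below -/
import Mathlib

section
/- Let α and β be coprime integers with α even and nonzero and β odd. Then there exist an integer l ≥ 0 and integers m₀, m₁, …, m_{2l+1} with m_i ≠ 0 for all 1 ≤ i ≤ 2l+1, such that the finite continued fraction [2m₀; 2m₁, …, 2m_{2l+1}] is well defined (every tail [2m_i; 2m_{i+1}, …, 2m_{2l+1}] with i ≥ 1 is nonzero) and its value equals the rational number β/α. -/
/-- The value of the finite continued fraction `[c₀; c₁, …, c_k]`, defined
recursively by `v_k = c_k` and `v_i = c_i + 1/v_{i+1}`. -/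
def cfVal : List ℤ → ℚ
  | [] => 0
  | [c] => (c : ℚ)
  | c :: cs => (c : ℚ) + (cfVal cs)⁻¹

/-- The continued fraction given by a list of partial quotients is well defined
if every tail value with index `i ≥ 1` is nonzero. -/
def CFWellDef (L : List ℤ) : Prop :=
  ∀ i : ℕ, 1 ≤ i → i < L.length → cfVal (L.drop i) ≠ 0

/-!
Dividing by `2q` with balanced remainder gives `p = 2mq + r` with `-|q| ≤ r < |q|`, and `r` has the
parity of `p`; if `p` and `q` have opposite parity, `r ≠ -|q|`, so `|r| < |q|`. Iterating from `β/α`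
yields an even Euclidean algorithm alternating between odd/even and even/odd quotients. Only an
odd divisor can leave the remainder `0`, so it stops after an even number of divisions, and the
strict decrease of the remainders makes every partial quotient after the first nonzero.
-/
theorem List.map_range_length_getD {α β : Type*} (L : List α) (d : α) (f : α → β) :
    (List.range L.length).map (fun i => f (L.getD i d)) = L.map f := by
  refine List.ext_getElem (by simp) fun i _ h => ?_
  rw [List.length_map] at h
  simp [List.getElem?_eq_getElem h]

theorem Int.exists_eq_two_mul_mul_add_abs_lt {p q : ℤ} (hq : q ≠ 0) (hpq : Odd (p + q)) :
    ∃ m r : ℤ, p = 2 * m * q + r ∧ |r| < |q| := by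
  have hn : 0 < 2 * q.natAbs := by omega
  have hdiv := Int.bmod_add_bdiv p (2 * q.natAbs)
  have hlo := Int.le_bmod (x := p) hn
  have hhi := Int.bmod_lt (x := p) hn
  set r := p.bmod (2 * q.natAbs)
  set d := p.bdiv (2 * q.natAbs)
  push_cast [Int.natCast_natAbs] at hdiv hlo hhi
  have hr : (r + q) % 2 = 1 := by
    have hrq : r + q = p + q - 2 * (|q| * d) := by linear_combination hdiv
    exact Int.odd_iff.mp (hrq ▸ hpq.sub_even (even_two_mul _))
  rcases abs_choice q with hq' | hq' <;> rw [hq'] at hdiv hlo hhi ⊢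
  · exact ⟨d, r, by linear_combination -hdiv, abs_lt.2 ⟨by omega, by omega⟩⟩
  · exact ⟨-d, r, by linear_combination -hdiv, abs_lt.2 ⟨by omega, by omega⟩⟩

theorem Int.even_iff_of_eq_two_mul_add {p m q r : ℤ} (h : p = 2 * m * q + r) :
    Even r ↔ Even p := by
  simp [h, Int.even_add, parity_simps]

theorem Int.odd_iff_of_eq_two_mul_add {p m q r : ℤ} (h : p = 2 * m * q + r) :
    Odd r ↔ Odd p := by
  simp only [← Int.not_even_iff_odd, Int.even_iff_of_eq_two_mul_add h]

theorem cfVal_cons_of_ne_nil (c : ℤ) {L : List ℤ} (hL : L ≠ []) :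
    cfVal (c :: L) = c + (cfVal L)⁻¹ := by
  cases L with
  | nil => exact absurd rfl hL
  | cons d L => rfl

theorem cfVal_cons_eq_div {c p q r : ℤ} {L : List ℤ} (hL : L ≠ []) (hq : q ≠ 0)
    (hp : p = c * q + r) (hL_val : cfVal L = q / r) : cfVal (c :: L) = p / q := by
  rw [cfVal_cons_of_ne_nil c hL, hL_val, inv_div, hp]
  push_cast
  field_simp

theorem cfWellDef_singleton (c : ℤ) : CFWellDef [c] := by
  intro i hi hlt
  simp only [List.length_singleton] at hlt
  omega

theorem cfWellDef_cons {c : ℤ} {L : List ℤ} (hL : L ≠ []) :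
    CFWellDef (c :: L) ↔ cfVal L ≠ 0 ∧ CFWellDef L := by
  have hL_len : 0 < L.length := List.length_pos_iff.mpr hL
  constructor
  · intro h
    refine ⟨h 1 le_rfl (by simpa using hL_len), fun i _ hi => h (i + 1) (by omega) (by simpa)⟩
  · rintro ⟨h₀, h⟩ i hi₁ hi
    obtain ⟨j, rfl⟩ := Nat.exists_eq_add_of_le' hi₁
    rcases j with _ | j
    · simpa using h₀
    · exact h (j + 1) (by omega) (by simpa using hi)

theorem exists_even_cf_of_even_div_odd {p q : ℤ} (hp : Even p) (hq : Odd q) (hqp : |q| < |p|) :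
    ∃ M : List ℤ, Odd M.length ∧ 0 ∉ M ∧ CFWellDef (M.map (2 * ·)) ∧
      cfVal (M.map (2 * ·)) = p / q := by
  induction h : q.natAbs using Nat.strong_induction_on generalizing p q with
  | _ n ih =>
  have hq0 : q ≠ 0 := by rintro rfl; simp at hq
  obtain ⟨m₁, r₁, hp₁, hr₁⟩ := Int.exists_eq_two_mul_mul_add_abs_lt hq0 (hp.add_odd hq)
  have hm₁ : m₁ ≠ 0 := by
    rintro rfl
    rw [hp₁] at hqp
    simp only [mul_zero, zero_mul, zero_add] at hqp
    linarith
  have hr₁ev : Even r₁ := (Int.even_iff_of_eq_two_mul_add hp₁).2 hp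
  rcases eq_or_ne r₁ 0 with rfl | hr₁0
  · refine ⟨[m₁], odd_one, by simpa using hm₁.symm, cfWellDef_singleton _, ?_⟩
    rw [hp₁]
    simp only [List.map_cons, List.map_nil, cfVal, Int.cast_mul, Int.cast_ofNat, add_zero]
    field_simp
  obtain ⟨m₂, r₂, hq₂, hr₂⟩ := Int.exists_eq_two_mul_mul_add_abs_lt hr₁0 (hq.add_even hr₁ev)
  have hm₂ : m₂ ≠ 0 := by
    rintro rfl
    rw [hq₂] at hr₁
    simp only [mul_zero, zero_mul, zero_add] at hr₁
    linarith
  have hr₂odd : Odd r₂ := (Int.odd_iff_of_eq_two_mul_add hq₂).2 hq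
  have hr₂0 : r₂ ≠ 0 := by rintro rfl; simp at hr₂odd
  obtain ⟨M, hM_len, hM0, hM_wd, hM_val⟩ := ih r₂.natAbs (by zify; linarith) hr₁ev hr₂odd hr₂ rfl
  have hM_ne : M.map (2 * ·) ≠ [] := by
    rintro h
    simp [List.map_eq_nil_iff.mp h] at hM_len
  have hv₂ : cfVal (2 * m₂ :: M.map (2 * ·)) = q / r₁ :=
    cfVal_cons_eq_div hM_ne hr₁0 hq₂ hM_val
  refine ⟨m₁ :: m₂ :: M, by simpa [parity_simps] using hM_len,
    by simp [hm₁.symm, hm₂.symm, hM0], ?_, ?_⟩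
  · rw [List.map_cons, List.map_cons, cfWellDef_cons (List.cons_ne_nil _ _), cfWellDef_cons hM_ne,
      hv₂, hM_val]
    exact ⟨div_ne_zero (by exact_mod_cast hq0) (by exact_mod_cast hr₁0),
      div_ne_zero (by exact_mod_cast hr₁0) (by exact_mod_cast hr₂0), hM_wd⟩
  · exact cfVal_cons_eq_div (List.cons_ne_nil _ _) hq0 hp₁ hv₂

theorem continued_fraction_expansion_alpha_even_beta_odd_general
    (α β : ℤ) (hαeven : Even α) (hαne : α ≠ 0) (hβodd : Odd β) :
    ∃ (l : ℕ) (m : ℕ → ℤ),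
      (∀ i : ℕ, 1 ≤ i → i ≤ 2 * l + 1 → m i ≠ 0) ∧
      CFWellDef ((List.range (2 * l + 2)).map fun i => 2 * m i) ∧
      cfVal ((List.range (2 * l + 2)).map fun i => 2 * m i) = (β : ℚ) / (α : ℚ) := by
  obtain ⟨m₀, r₀, hβ, hr₀⟩ := Int.exists_eq_two_mul_mul_add_abs_lt hαne (hβodd.add_even hαeven)
  have hr₀odd : Odd r₀ := (Int.odd_iff_of_eq_two_mul_add hβ).2 hβodd
  obtain ⟨M, ⟨l, hl⟩, hM0, hM_wd, hM_val⟩ := exists_even_cf_of_even_div_odd hαeven hr₀odd hr₀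
  have hM_ne : M.map (2 * ·) ≠ [] := by simp [← List.length_pos_iff, hl]
  have hlen : (m₀ :: M).length = 2 * l + 2 := by simp [hl]
  refine ⟨l, fun i => (m₀ :: M).getD i 0, fun i hi₁ hi₂ => ?_, ?_⟩
  · obtain ⟨j, rfl⟩ := Nat.exists_eq_add_of_le' hi₁
    dsimp only
    rw [List.getD_cons_succ, List.getD_eq_getElem _ _ (by omega)]
    exact ne_of_mem_of_not_mem (List.getElem_mem _) hM0
  · rw [← hlen, List.map_range_length_getD (m₀ :: M) 0 (2 * ·), List.map_cons,
      cfWellDef_cons hM_ne, hM_val]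
    have hr₀0 : r₀ ≠ 0 := by rintro rfl; simp at hr₀odd
    exact ⟨⟨div_ne_zero (by exact_mod_cast hαne) (by exact_mod_cast hr₀0), hM_wd⟩,
      cfVal_cons_eq_div hM_ne hαne hβ hM_val⟩

theorem continued_fraction_expansion_alpha_even_beta_odd
    (α β : ℤ) (hcop : IsCoprime α β) (hαeven : Even α) (hαne : α ≠ 0) (hβodd : Odd β) :
    ∃ (l : ℕ) (m : ℕ → ℤ),
      (∀ i : ℕ, 1 ≤ i → i ≤ 2 * l + 1 → m i ≠ 0) ∧
      CFWellDef ((List.range (2 * l + 2)).map fun i => 2 * m i) ∧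
      cfVal ((List.range (2 * l + 2)).map fun i => 2 * m i) = (β : ℚ) / (α : ℚ) :=
  continued_fraction_expansion_alpha_even_beta_odd_general α β hαeven hαne hβodd
end

section
/- Let α and β be coprime integers with α odd and positive and β odd. Then there exist an integer l ≥ 0 and integers m₀, m₁, …, m_l with m_i ≠ 0 for all 1 ≤ i ≤ l−1, such that the finite continued fraction [2m₀; 2m₁, …, 2m_{l−1}, 2m_l + 1] (whose last partial quotient is the odd integer 2m_l + 1 and all other partial quotients are the even integers 2m_i) is well defined (every tail with index i ≥ 1 is nonzero) and its value equals the rational number β/α. -/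
/-!
Divide by the nearest even multiple: `β = 2m₀α + β'` with `|β'| < |α|`, where `|β'| = |α|` is
ruled out by coprimality unless `α = ±1`. Then `β'` is odd and coprime to `α`, and
`β / α = 2m₀ + 1 / (α / β')`, so we recurse on `α / β'`, whose denominator is smaller. When
`α = ±1` the value `β / α` is itself an odd integer, the last quotient `2m_l + 1`.
-/

lemma cfVal_cons {L : List ℤ} (hL : L ≠ []) (c : ℤ) :
    cfVal (c :: L) = c + (cfVal L)⁻¹ := by
  cases L with
  | nil => exact absurd rfl hL
  | cons _ _ => rfl

lemma CFWellDef.cons {L : List ℤ} (h0 : cfVal L ≠ 0) (h : CFWellDef L) (c : ℤ) :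
    CFWellDef (c :: L) := by
  rintro (_ | _ | i) hi hlen
  · omega
  · simpa using h0
  · exact h (i + 1) (by omega) (by simpa using hlen)

def evenOddCF (l : ℕ) (m : ℕ → ℤ) : List ℤ :=
  ((List.range l).map fun i => 2 * m i) ++ [2 * m l + 1]

lemma evenOddCF_ne_nil (l : ℕ) (m : ℕ → ℤ) : evenOddCF l m ≠ [] := by
  simp [evenOddCF]

lemma evenOddCF_succ (l : ℕ) (m₀ : ℤ) (m : ℕ → ℤ) :
    evenOddCF (l + 1) (fun | 0 => m₀ | i + 1 => m i) = 2 * m₀ :: evenOddCF l m := by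
  simp [evenOddCF, List.range_succ_eq_map, Function.comp_def]

lemma exists_abs_sub_two_mul_le {α : ℤ} (hα : α ≠ 0) (β : ℤ) :
    ∃ m : ℤ, |β - 2 * m * α| ≤ |α| := by
  refine ⟨round ((β : ℚ) / (2 * α)), ?_⟩
  have hαQ : (α : ℚ) ≠ 0 := by exact_mod_cast hα
  have key : ((β - 2 * round ((β : ℚ) / (2 * α)) * α : ℤ) : ℚ)
      = 2 * α * ((β : ℚ) / (2 * α) - round ((β : ℚ) / (2 * α))) := by
    push_cast
    field_simp
  have hQ : |((β - 2 * round ((β : ℚ) / (2 * α)) * α : ℤ) : ℚ)| ≤ |(α : ℚ)| := by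
    rw [key, abs_mul, abs_mul, abs_two]
    nlinarith [abs_sub_round ((β : ℚ) / (2 * α)), abs_nonneg (α : ℚ)]
  exact_mod_cast hQ

/-- A remainder `β - 2mα = ±α` would give `α ∣ β`. -/
lemma exists_abs_sub_two_mul_lt {α β : ℤ} (hcop : IsCoprime α β) (hα : 1 < |α|) :
    ∃ m : ℤ, |β - 2 * m * α| < |α| := by
  obtain ⟨m, hm⟩ := exists_abs_sub_two_mul_le (α := α) (by rintro rfl; simp at hα) β
  refine ⟨m, hm.lt_of_ne fun heq => hα.ne' ?_⟩
  have hdvd : α ∣ β := by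
    have : α ∣ β - 2 * m * α := (abs_dvd_abs _ _).mp (heq ▸ dvd_rfl)
    simpa using this.add (dvd_mul_left α (2 * m))
  exact Int.isUnit_iff_abs_eq.mp (hcop.isUnit_of_dvd' dvd_rfl hdvd)

lemma exists_evenOddCF_of_abs_eq_one {α β : ℤ} (hα : |α| = 1) (hβodd : Odd β) :
    ∃ (l : ℕ) (m : ℕ → ℤ),
      (∀ i : ℕ, 1 ≤ i → i < l → m i ≠ 0) ∧ (|α| < |β| → m 0 ≠ 0) ∧
      CFWellDef (evenOddCF l m) ∧ cfVal (evenOddCF l m) = (β : ℚ) / α := by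
  have hαsq : α * α = 1 := by rw [← abs_mul_abs_self, hα, mul_one]
  have hαodd : Odd α := Int.odd_mul.mp (hαsq ▸ odd_one) |>.1
  obtain ⟨k, hk⟩ := hβodd.mul hαodd
  refine ⟨0, fun _ => k, by omega, fun hlt (hk0 : k = 0) => ?_, ?_, ?_⟩
  · rw [hk0, mul_zero, zero_add] at hk
    have := congrArg abs hk
    rw [abs_mul, hα, mul_one, abs_one] at this
    omega
  · intro i hi hlen
    simp [evenOddCF] at hlen
    omega
  · have hαsqQ : (α : ℚ) * α = 1 := by exact_mod_cast hαsq
    simp only [evenOddCF, List.range_zero, List.map_nil, List.nil_append, cfVal]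
    rw [← hk]
    push_cast
    rw [eq_div_iff (left_ne_zero_of_mul_eq_one hαsqQ)]
    linear_combination (β : ℚ) * hαsqQ

/-- The second conjunct is the induction invariant: the recursion expands `α / β'` with
`|β'| < |α|`, whose leading quotient becomes an interior quotient of the whole expansion. -/
theorem exists_evenOddCF (α β : ℤ) (hcop : IsCoprime α β) (hαodd : Odd α) (hβodd : Odd β) :
    ∃ (l : ℕ) (m : ℕ → ℤ),
      (∀ i : ℕ, 1 ≤ i → i < l → m i ≠ 0) ∧ (|α| < |β| → m 0 ≠ 0) ∧
      CFWellDef (evenOddCF l m) ∧ cfVal (evenOddCF l m) = (β : ℚ) / α := by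
  induction hn : α.natAbs using Nat.strong_induction_on generalizing α β with
  | _ n ih =>
  subst hn
  have hα0 : α ≠ 0 := by rintro rfl; simp at hαodd
  rcases (Int.one_le_abs hα0).eq_or_lt with hα1 | hα1
  · exact exists_evenOddCF_of_abs_eq_one hα1.symm hβodd
  · obtain ⟨m₀, hm₀⟩ := exists_abs_sub_two_mul_lt hcop hα1
    set β' := β - 2 * m₀ * α with hβ'
    have hβ'odd : Odd β' := hβodd.sub_even ((even_two_mul m₀).mul_right α)
    have hβ'0 : β' ≠ 0 := by rintro h; simp [h] at hβ'odd
    have hcop' : IsCoprime β' α := by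
      simpa [hβ', sub_eq_add_neg, mul_comm] using (hcop.add_mul_left_right (-(2 * m₀))).symm
    obtain ⟨l, m, hint, hlead, hwd, hval⟩ :=
      ih β'.natAbs (by zify; exact hm₀) β' α hcop' hβ'odd hαodd rfl
    refine ⟨l + 1, fun | 0 => m₀ | i + 1 => m i, ?_, ?_, ?_, ?_⟩
    · rintro (_ | _ | i) hi hil
      · omega
      · exact hlead hm₀
      · exact hint (i + 1) (by omega) (by omega)
    · rintro hlt rfl
      simp only [hβ', mul_zero, zero_mul, sub_zero] at hm₀
      exact hlt.not_gt hm₀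
    · have hval0 : cfVal (evenOddCF l m) ≠ 0 := by
        rw [hval]; exact div_ne_zero (by exact_mod_cast hα0) (by exact_mod_cast hβ'0)
      rw [evenOddCF_succ]
      exact hwd.cons hval0 _
    · have hαQ : (α : ℚ) ≠ 0 := by exact_mod_cast hα0
      rw [evenOddCF_succ, cfVal_cons (evenOddCF_ne_nil l m), hval, inv_div, hβ']
      push_cast
      field_simp
      ring

theorem continued_fraction_expansion_alpha_odd_beta_odd_general
    (α β : ℤ) (hcop : IsCoprime α β) (hαodd : Odd α) (hβodd : Odd β) :
    ∃ (l : ℕ) (m : ℕ → ℤ),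
      (∀ i : ℕ, 1 ≤ i → i < l → m i ≠ 0) ∧
      CFWellDef (((List.range l).map fun i => 2 * m i) ++ [2 * m l + 1]) ∧
      cfVal (((List.range l).map fun i => 2 * m i) ++ [2 * m l + 1]) = (β : ℚ) / (α : ℚ) := by
  obtain ⟨l, m, hint, -, hwd, hval⟩ := exists_evenOddCF α β hcop hαodd hβodd
  exact ⟨l, m, hint, hwd, hval⟩

theorem continued_fraction_expansion_alpha_odd_beta_odd
    (α β : ℤ) (hcop : IsCoprime α β) (hαodd : Odd α) (hαpos : 0 < α) (hβodd : Odd β) :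
    ∃ (l : ℕ) (m : ℕ → ℤ),
      (∀ i : ℕ, 1 ≤ i → i < l → m i ≠ 0) ∧
      CFWellDef (((List.range l).map fun i => 2 * m i) ++ [2 * m l + 1]) ∧
      cfVal (((List.range l).map fun i => 2 * m i) ++ [2 * m l + 1]) = (β : ℚ) / (α : ℚ) :=
  continued_fraction_expansion_alpha_odd_beta_odd_general α β hcop hαodd hβodd
end
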